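/- For every j ∈ {1,...,M}, the stopping set Γ^{(j)} = {π ∈ S^M : V₀(π) = h_j(π) = h(π)} is closed and convex, and Γ^{(j)} = ∩_{N≥1} Γ_N^{(j)} where Γ_N^{(j)} = {π ∈ S^M : V₀^N(π) = h_j(π) = h(π)} form a decreasing sequence of closed convex sets. -/

import Mathlib

/-!
Since `V₀ ≤ V₀ᴺ ≤ h ≤ h_j` on the simplex, the condition `V₀ᴺ = h_j = h` reduces to `V₀ᴺ = h_j`:
the contact set of a concave function with an affine majorant. It is closed by continuity, and
convex because it is the sublevel set `{h_j - V₀ᴺ ≤ 0}` of a convex function. The sets decrease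
in `N` since `V₀ᴺ` does, and their intersection is the contact set of the pointwise limit `V₀`.
-/

open Filter

/-- `h_j(π) = Σ_{i=0}^M π_i a_{ij}`. -/
def hj {M : ℕ} (a : Fin (M + 1) → Fin (M + 1) → ℝ) (j : Fin (M + 1))
    (π : Fin (M + 1) → ℝ) : ℝ :=
  ∑ i : Fin (M + 1), π i * a i j

/-- `h(π) = min_{j ∈ {1,…,M}} h_j(π)`. -/
noncomputable def hfun {M : ℕ} (a : Fin (M + 1) → Fin (M + 1) → ℝ)
    (π : Fin (M + 1) → ℝ) : ℝ :=
  ⨅ j : {j : Fin (M + 1) // j ≠ 0}, hj a (j : Fin (M + 1)) π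

section ContactSet

variable {E : Type*} {s : Set E} {F G g : E → ℝ}

theorem setOf_eq_and_eq_eq_setOf_eq (hFG : ∀ x ∈ s, F x ≤ G x) (hGg : ∀ x ∈ s, G x ≤ g x) :
    {x ∈ s | F x = g x ∧ g x = G x} = {x ∈ s | F x = g x} := by
  ext x
  simp only [Set.mem_ofPred_eq]
  constructor
  · rintro ⟨hx, hFgx, -⟩
    exact ⟨hx, hFgx⟩
  · rintro ⟨hx, hFgx⟩
    exact ⟨hx, hFgx, le_antisymm (hFgx ▸ hFG x hx) (hGg x hx)⟩

theorem setOf_eq_subset_setOf_eq (hGF : ∀ x ∈ s, G x ≤ F x) (hFg : ∀ x ∈ s, F x ≤ g x) :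
    {x ∈ s | G x = g x} ⊆ {x ∈ s | F x = g x} := by
  rintro x ⟨hx, hGgx⟩
  exact ⟨hx, le_antisymm (hFg x hx) (hGgx ▸ hGF x hx)⟩

theorem isClosed_setOf_eq [TopologicalSpace E] (hs : IsClosed s) (hF : ContinuousOn F s)
    (hg : ContinuousOn g s) : IsClosed {x ∈ s | F x = g x} := by
  have := (hF.sub hg).preimage_isClosed_of_isClosed hs (isClosed_singleton (x := (0 : ℝ)))
  simp only [Set.preimage, Set.mem_singleton_iff, Pi.sub_apply, sub_eq_zero] at this
  exact this

theorem convex_setOf_eq [AddCommMonoid E] [Module ℝ E] (hF : ConcaveOn ℝ s F)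
    (hg : ConvexOn ℝ s g) (hFg : ∀ x ∈ s, F x ≤ g x) : Convex ℝ {x ∈ s | F x = g x} := by
  have hsub : {x ∈ s | F x = g x} = {x ∈ s | (g - F) x ≤ 0} := by
    ext x
    simp only [Set.mem_ofPred_eq, Pi.sub_apply, sub_nonpos]
    exact ⟨fun ⟨hx, h⟩ => ⟨hx, h.ge⟩, fun ⟨hx, h⟩ => ⟨hx, le_antisymm (hFg x hx) h⟩⟩
  rw [hsub]
  exact (hg.sub hF).convex_le 0

theorem setOf_eq_eq_iInter_of_tendsto {Fn : ℕ → E → ℝ} (n₀ : ℕ)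
    (hFFn : ∀ n, ∀ x ∈ s, F x ≤ Fn n x) (hFng : ∀ n, ∀ x ∈ s, Fn n x ≤ g x)
    (hlim : ∀ x ∈ s, Tendsto (fun n => Fn n x) atTop (nhds (F x))) :
    {x ∈ s | F x = g x} = ⋂ n ≥ n₀, {x ∈ s | Fn n x = g x} := by
  refine subset_antisymm
    (Set.subset_iInter₂ fun n _ => setOf_eq_subset_setOf_eq (hFFn n) (hFng n)) ?_
  intro x hx
  simp only [Set.mem_iInter] at hx
  obtain ⟨hxs, -⟩ := hx n₀ le_rfl
  have hconst : (fun n => Fn n x) =ᶠ[atTop] fun _ => g x :=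
    eventually_atTop.2 ⟨n₀, fun n hn => (hx n hn).2⟩
  exact ⟨hxs, tendsto_nhds_unique (hlim x hxs) (tendsto_const_nhds.congr' hconst.symm)⟩

end ContactSet

theorem hfun_le_hj {M : ℕ} (a : Fin (M + 1) → Fin (M + 1) → ℝ) {j : Fin (M + 1)} (hj0 : j ≠ 0)
    (π : Fin (M + 1) → ℝ) : hfun a π ≤ hj a j π :=
  ciInf_le (Set.finite_range _).bddBelow (⟨j, hj0⟩ : {j : Fin (M + 1) // j ≠ 0})

theorem hj_eq_linearMap {M : ℕ} (a : Fin (M + 1) → Fin (M + 1) → ℝ) (j : Fin (M + 1)) :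
    hj a j = ⇑(∑ i, a i j • LinearMap.proj (R := ℝ) (φ := fun _ : Fin (M + 1) => ℝ) i) := by
  ext π
  simp [hj, mul_comm]

theorem convexOn_hj {M : ℕ} (a : Fin (M + 1) → Fin (M + 1) → ℝ) (j : Fin (M + 1))
    {s : Set (Fin (M + 1) → ℝ)} (hs : Convex ℝ s) : ConvexOn ℝ s (hj a j) :=
  hj_eq_linearMap a j ▸ LinearMap.convexOn _ hs

theorem continuous_hj {M : ℕ} (a : Fin (M + 1) → Fin (M + 1) → ℝ) (j : Fin (M + 1)) :
    Continuous (hj a j) :=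
  hj_eq_linearMap a j ▸ LinearMap.continuous_of_finiteDimensional _

theorem stopping_sets_closed_convex_general
    {M : ℕ} (a : Fin (M + 1) → Fin (M + 1) → ℝ)
    (V0N : ℕ → (Fin (M + 1) → ℝ) → ℝ) (V0 : (Fin (M + 1) → ℝ) → ℝ)
    (hV0Ncont : ∀ N, ContinuousOn (V0N N) (stdSimplex ℝ (Fin (M + 1))))
    (hV0Nconc : ∀ N, ConcaveOn ℝ (stdSimplex ℝ (Fin (M + 1))) (V0N N))
    (hV0cont : ContinuousOn V0 (stdSimplex ℝ (Fin (M + 1))))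
    (hV0conc : ConcaveOn ℝ (stdSimplex ℝ (Fin (M + 1))) V0)
    (hanti : ∀ (N N' : ℕ), N ≤ N' →
      ∀ π ∈ stdSimplex ℝ (Fin (M + 1)), V0N N' π ≤ V0N N π)
    (hlim : ∀ π ∈ stdSimplex ℝ (Fin (M + 1)),
      Tendsto (fun N : ℕ => V0N N π) atTop (nhds (V0 π)))
    (hle : ∀ N, ∀ π ∈ stdSimplex ℝ (Fin (M + 1)),
      V0 π ≤ V0N N π ∧ V0N N π ≤ hfun a π) :
    ∀ j : Fin (M + 1), j ≠ 0 →
      IsClosed {π ∈ stdSimplex ℝ (Fin (M + 1)) |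
          V0 π = hj a j π ∧ hj a j π = hfun a π} ∧
      Convex ℝ {π ∈ stdSimplex ℝ (Fin (M + 1)) |
          V0 π = hj a j π ∧ hj a j π = hfun a π} ∧
      (∀ N : ℕ,
        IsClosed {π ∈ stdSimplex ℝ (Fin (M + 1)) |
            V0N N π = hj a j π ∧ hj a j π = hfun a π} ∧
        Convex ℝ {π ∈ stdSimplex ℝ (Fin (M + 1)) |
            V0N N π = hj a j π ∧ hj a j π = hfun a π}) ∧
      (∀ (N N' : ℕ), N ≤ N' →
        {π ∈ stdSimplex ℝ (Fin (M + 1)) |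
            V0N N' π = hj a j π ∧ hj a j π = hfun a π}
          ⊆ {π ∈ stdSimplex ℝ (Fin (M + 1)) |
              V0N N π = hj a j π ∧ hj a j π = hfun a π}) ∧
      {π ∈ stdSimplex ℝ (Fin (M + 1)) | V0 π = hj a j π ∧ hj a j π = hfun a π}
        = ⋂ N ∈ {N : ℕ | 1 ≤ N},
            {π ∈ stdSimplex ℝ (Fin (M + 1)) |
              V0N N π = hj a j π ∧ hj a j π = hfun a π} := by
  intro j hj0
  set S := stdSimplex ℝ (Fin (M + 1))
  have hV0N_le : ∀ N, ∀ π ∈ S, V0N N π ≤ hfun a π := fun N π hπ => (hle N π hπ).2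
  have hV0_le : ∀ π ∈ S, V0 π ≤ hfun a π := fun π hπ => (hle 0 π hπ).1.trans (hV0N_le 0 π hπ)
  have hfun_le : ∀ π ∈ S, hfun a π ≤ hj a j π := fun π _ => hfun_le_hj a hj0 π
  have hΓN (N : ℕ) := setOf_eq_and_eq_eq_setOf_eq (hV0N_le N) hfun_le
  simp only [setOf_eq_and_eq_eq_setOf_eq hV0_le hfun_le, hΓN]
  have hV0N_le_hj : ∀ N, ∀ π ∈ S, V0N N π ≤ hj a j π := fun N π hπ =>
    (hV0N_le N π hπ).trans (hfun_le π hπ)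
  refine ⟨isClosed_setOf_eq (isClosed_stdSimplex _ _) hV0cont (continuous_hj a j).continuousOn,
    convex_setOf_eq hV0conc (convexOn_hj a j (convex_stdSimplex _ _))
      fun π hπ => (hV0_le π hπ).trans (hfun_le π hπ),
    fun N => ⟨isClosed_setOf_eq (isClosed_stdSimplex _ _) (hV0Ncont N)
        (continuous_hj a j).continuousOn,
      convex_setOf_eq (hV0Nconc N) (convexOn_hj a j (convex_stdSimplex _ _)) (hV0N_le_hj N)⟩,
    fun N N' hNN' => setOf_eq_subset_setOf_eq (hanti N N' hNN') (hV0N_le_hj N),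
    setOf_eq_eq_iInter_of_tendsto 1 (fun N π hπ => (hle N π hπ).1) hV0N_le_hj hlim⟩

/-- each `Γ^{(j)} = {π ∈ S^M : V₀(π) = h_j(π) = h(π)}` is closed and
convex, and `Γ^{(j)} = ∩_{N≥1} Γ_N^{(j)}` where the
`Γ_N^{(j)} = {π ∈ S^M : V₀^N(π) = h_j(π) = h(π)}` form a decreasing sequence of
closed convex sets. -/
theorem stopping_sets_closed_convex
    {M : ℕ} (hM : 0 < M) (c : ℝ) (hc : 0 < c)
    (a : Fin (M + 1) → Fin (M + 1) → ℝ)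
    (ha : ∀ (i j : Fin (M + 1)), j ≠ 0 → 0 ≤ a i j)
    (haii : ∀ j : Fin (M + 1), j ≠ 0 → a j j = 0)
    (V0N : ℕ → (Fin (M + 1) → ℝ) → ℝ) (V0 : (Fin (M + 1) → ℝ) → ℝ)
    (hV0Ncont : ∀ N, ContinuousOn (V0N N) (stdSimplex ℝ (Fin (M + 1))))
    (hV0Nconc : ∀ N, ConcaveOn ℝ (stdSimplex ℝ (Fin (M + 1))) (V0N N))
    (hV0cont : ContinuousOn V0 (stdSimplex ℝ (Fin (M + 1))))
    (hV0conc : ConcaveOn ℝ (stdSimplex ℝ (Fin (M + 1))) V0)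
    (hanti : ∀ (N N' : ℕ), N ≤ N' →
      ∀ π ∈ stdSimplex ℝ (Fin (M + 1)), V0N N' π ≤ V0N N π)
    (hlim : ∀ π ∈ stdSimplex ℝ (Fin (M + 1)),
      Tendsto (fun N : ℕ => V0N N π) atTop (nhds (V0 π)))
    (hle : ∀ N, ∀ π ∈ stdSimplex ℝ (Fin (M + 1)),
      V0 π ≤ V0N N π ∧ V0N N π ≤ hfun a π) :
    ∀ j : Fin (M + 1), j ≠ 0 →
      IsClosed {π ∈ stdSimplex ℝ (Fin (M + 1)) |
          V0 π = hj a j π ∧ hj a j π = hfun a π} ∧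
      Convex ℝ {π ∈ stdSimplex ℝ (Fin (M + 1)) |
          V0 π = hj a j π ∧ hj a j π = hfun a π} ∧
      (∀ N : ℕ,
        IsClosed {π ∈ stdSimplex ℝ (Fin (M + 1)) |
            V0N N π = hj a j π ∧ hj a j π = hfun a π} ∧
        Convex ℝ {π ∈ stdSimplex ℝ (Fin (M + 1)) |
            V0N N π = hj a j π ∧ hj a j π = hfun a π}) ∧
      (∀ (N N' : ℕ), N ≤ N' →
        {π ∈ stdSimplex ℝ (Fin (M + 1)) |
            V0N N' π = hj a j π ∧ hj a j π = hfun a π}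
          ⊆ {π ∈ stdSimplex ℝ (Fin (M + 1)) |
              V0N N π = hj a j π ∧ hj a j π = hfun a π}) ∧
      {π ∈ stdSimplex ℝ (Fin (M + 1)) | V0 π = hj a j π ∧ hj a j π = hfun a π}
        = ⋂ N ∈ {N : ℕ | 1 ≤ N},
            {π ∈ stdSimplex ℝ (Fin (M + 1)) |
              V0N N π = hj a j π ∧ hj a j π = hfun a π} :=
  stopping_sets_closed_convex_general a V0N V0 hV0Ncont hV0Nconc hV0cont hV0conc hanti hlim hle
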